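/- Let X be a Borel subset of ℝ^m, Y a finite set, U a finite set, T a transition kernel from X×U to X and Q an observation kernel from X to Y. Assume that for some α_X < ∞ one has ‖T(·|x,u) − T(·|x',u)‖_TV ≤ α_X |x − x'| for all x, x' ∈ X and all u ∈ U. Then for every z, z' ∈ P(X) and every u ∈ U, the predictive observation distributions satisfy ‖P(·|z,u) − P(·|z',u)‖_TV ≤ (1 + α_X) ρ_BL(z, z'), where ρ_BL is the bounded-Lipschitz metric on P(X) induced by the Euclidean metric on X. -/

import Mathlib

/-! For `|f| ≤ 1` on `Y`, Fubini gives `∑_y f(y) P(y|z,u) = ∫ h dz` with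
`h(x) = ∫ ∑_y f(y) Q(y|x₁) T(dx₁|x,u)`. Since `|∑_y f(y) Q(y|·)| ≤ 1`, the total variation
hypothesis makes `h` bounded by `1` and `αX`-Lipschitz, so `h / (1 + αX)` is a test function
for `ρ_BL`. If `αX < 0` the hypothesis forces `X` to be a single point, and both sides vanish. -/

open MeasureTheory

noncomputable section

/-- `‖f‖_BL ≤ c` with respect to the distance-like function `d`:
there are `a, b ≥ 0` with `a + b ≤ c` such that `f` is bounded by `a` and
`b`-Lipschitz with respect to `d`. -/
def blNormLE {S : Type*} (d : S → S → ℝ) (f : S → ℝ) (c : ℝ) : Prop :=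
  ∃ a b : ℝ, 0 ≤ a ∧ 0 ≤ b ∧ a + b ≤ c ∧ (∀ x, |f x| ≤ a) ∧
    ∀ x y, |f x - f y| ≤ b * d x y

/-- Bounded-Lipschitz distance between two measures, induced by `d`. -/
def blDist {S : Type*} [MeasurableSpace S] (d : S → S → ℝ) (μ ν : Measure S) : ℝ :=
  sSup {r | ∃ f : S → ℝ, Measurable f ∧ blNormLE d f 1 ∧
    r = |∫ x, f x ∂μ - ∫ x, f x ∂ν|}

/-- Total variation distance between two measures. -/
def tvDist {S : Type*} [MeasurableSpace S] (μ ν : Measure S) : ℝ :=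
  sSup {r | ∃ f : S → ℝ, Measurable f ∧ (∀ x, |f x| ≤ 1) ∧
    r = |∫ x, f x ∂μ - ∫ x, f x ∂ν|}

variable {X Y U : Type*} [MeasurableSpace X] [Fintype Y]

/-- One-step push-forward `zT_u` of a belief `z` through the transition kernel `T`. -/
def beliefPush (T : X → U → Measure X) (z : Measure X) (u : U) : Measure X :=
  z.bind fun x => T x u

/-- Predictive probability `P(y|z,u) = ∫ Q(y|x₁) (zT_u)(dx₁)` of observing `y`. -/
def obsProb (T : X → U → Measure X) (Q : X → Y → ℝ) (z : Measure X) (u : U) (y : Y) : ℝ :=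
  ∫ x, Q x y ∂(beliefPush T z u)

/-- Bayes update `F(z,u,y)` of the belief `z` after applying `u` and observing `y`. -/
def bayes (T : X → U → Measure X) (Q : X → Y → ℝ) (z : Measure X) (u : U) (y : Y) :
    Measure X :=
  (ENNReal.ofReal (obsProb T Q z u y))⁻¹ •
    ((beliefPush T z u).withDensity fun x => ENNReal.ofReal (Q x y))

/-- Integral of a function `f` on beliefs against the belief transition kernel
`η(·|z,u) = Σ_{y : P(y|z,u) > 0} P(y|z,u) δ_{F(z,u,y)}`. -/
def etaInt (T : X → U → Measure X) (Q : X → Y → ℝ) (f : Measure X → ℝ)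
    (z : Measure X) (u : U) : ℝ :=
  ∑ y : Y, if 0 < obsProb T Q z u y then obsProb T Q z u y * f (bayes T Q z u y) else 0

/-- Bounded-Lipschitz distance (with respect to a pseudometric `ρ` on beliefs)
between `η(·|z,u)` and `η(·|z',u)`. -/
def etaBLDist (T : X → U → Measure X) (Q : X → Y → ℝ)
    (ρ : Measure X → Measure X → ℝ) (z z' : Measure X) (u : U) : ℝ :=
  sSup {r | ∃ f : Measure X → ℝ, blNormLE ρ f 1 ∧
    r = |etaInt T Q f z u - etaInt T Q f z' u|}

/-- The pseudometric `ρ(μ,ν) = Σ_{m ≥ 1} 2^{-(m+1)} |∫ f_m dμ - ∫ f_m dν|` on beliefs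
induced by the sequence of test functions `fs` (with `fs k` playing the role of `f_{k+1}`). -/
def rhoSeq (fs : ℕ → X → ℝ) (μ ν : Measure X) : ℝ :=
  ∑' k : ℕ, (2 : ℝ)⁻¹ ^ (k + 2) * |∫ x, fs k x ∂μ - ∫ x, fs k x ∂ν|

/-- Dobrushin coefficient of an observation channel `Q` into a finite set. -/
def dobrushinObs (Q : X → Y → ℝ) : ℝ :=
  ⨅ p : X × X, ∑ y : Y, min (Q p.1 y) (Q p.2 y)

/-- Dobrushin coefficient of a Markov kernel `K`, via finite measurable partitions. -/
def dobrushinKernel (K : X → Measure X) : ℝ :=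
  sInf {r | ∃ (x x' : X) (n : ℕ) (A : Fin n → Set X),
    (∀ i, MeasurableSet (A i)) ∧ Pairwise (Function.onFun Disjoint A) ∧
    (⋃ i, A i) = Set.univ ∧
    r = ∑ i, min ((K x (A i)).toReal) ((K x' (A i)).toReal)}

/-- `δ̃(T) = inf_u δ(T(·|·,u))`. -/
def dobrushinTrans (T : X → U → Measure X) : ℝ :=
  ⨅ u : U, dobrushinKernel fun x => T x u

end

/-- Total variation distance between the predictive observation distributions
`P(·|z,u)` and `P(·|z',u)` on the finite observation set `Y`. -/
noncomputable def obsTVDist {X Y U : Type*} [MeasurableSpace X] [Fintype Y]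
    (T : X → U → MeasureTheory.Measure X) (Q : X → Y → ℝ)
    (z z' : MeasureTheory.Measure X) (u : U) : ℝ :=
  sSup {r | ∃ f : Y → ℝ, (∀ y, |f y| ≤ 1) ∧
    r = |∑ y : Y, f y * obsProb T Q z u y - ∑ y : Y, f y * obsProb T Q z' u y|}

open ProbabilityTheory

lemma MeasureTheory.Measure.integral_bind_kernel {α β E : Type*} {mα : MeasurableSpace α}
    {mβ : MeasurableSpace β} [NormedAddCommGroup E] [NormedSpace ℝ E]
    (μ : Measure α) (κ : Kernel α β) {f : β → E} (hf : Integrable f (μ.bind κ)) :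
    ∫ y, f y ∂(μ.bind κ) = ∫ x, ∫ y, f y ∂κ x ∂μ := by
  rw [Measure.comp_eq_comp_const_apply] at hf ⊢
  simpa using Kernel.integral_comp hf

lemma MeasureTheory.Measure.eq_of_subsingleton {S : Type*} [MeasurableSpace S] [Subsingleton S]
    (μ ν : Measure S) [IsProbabilityMeasure μ] [IsProbabilityMeasure ν] : μ = ν := by
  ext s -
  rcases s.eq_empty_or_nonempty with rfl | hs
  · simp
  · simp [hs.eq_univ]

section Distances

variable {S : Type*} {d : S → S → ℝ} {f : S → ℝ} {c : ℝ}

lemma blNormLE.abs_le (h : blNormLE d f c) (x : S) : |f x| ≤ c := by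
  obtain ⟨a, b, -, hb, hab, hfa, -⟩ := h
  linarith [hfa x]

lemma blNormLE.const_mul (h : blNormLE d f c) {k : ℝ} (hk : 0 ≤ k) :
    blNormLE d (fun x => k * f x) (k * c) := by
  obtain ⟨a, b, ha, hb, hab, hfa, hfb⟩ := h
  refine ⟨k * a, k * b, by positivity, by positivity, by nlinarith, fun x => ?_, fun x y => ?_⟩
  · rw [abs_mul, abs_of_nonneg hk]
    exact mul_le_mul_of_nonneg_left (hfa x) hk
  · rw [← mul_sub, abs_mul, abs_of_nonneg hk, mul_assoc]
    exact mul_le_mul_of_nonneg_left (hfb x y) hk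

variable [MeasurableSpace S] {μ ν : Measure S}

lemma abs_integral_le_measureReal_univ (ρ : Measure S) [IsFiniteMeasure ρ]
    (hf : ∀ x, |f x| ≤ 1) : |∫ x, f x ∂ρ| ≤ ρ.real Set.univ := by
  simpa using norm_integral_le_of_norm_le_const (μ := ρ) (f := f) (C := 1)
    (ae_of_all _ fun x => (Real.norm_eq_abs (f x)).trans_le (hf x))

lemma abs_integral_sub_le_of_abs_le_one [IsFiniteMeasure μ] [IsFiniteMeasure ν]
    (hf : ∀ x, |f x| ≤ 1) : |∫ x, f x ∂μ - ∫ x, f x ∂ν| ≤ μ.real Set.univ + ν.real Set.univ :=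
  (abs_sub _ _).trans <|
    add_le_add (abs_integral_le_measureReal_univ μ hf) (abs_integral_le_measureReal_univ ν hf)

lemma tvDist_nonneg (μ ν : Measure S) : 0 ≤ tvDist μ ν :=
  Real.sSup_nonneg fun _ ⟨_, _, _, hr⟩ => hr ▸ abs_nonneg _

lemma abs_integral_sub_le_tvDist [IsFiniteMeasure μ] [IsFiniteMeasure ν] (hf : Measurable f)
    (hf1 : ∀ x, |f x| ≤ 1) : |∫ x, f x ∂μ - ∫ x, f x ∂ν| ≤ tvDist μ ν :=
  le_csSup ⟨μ.real Set.univ + ν.real Set.univ,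
    fun _ ⟨_, _, hg1, hr⟩ => hr ▸ abs_integral_sub_le_of_abs_le_one hg1⟩ ⟨f, hf, hf1, rfl⟩

lemma blDist_nonneg (d : S → S → ℝ) (μ ν : Measure S) : 0 ≤ blDist d μ ν :=
  Real.sSup_nonneg fun _ ⟨_, _, _, hr⟩ => hr ▸ abs_nonneg _

lemma blDist_self (d : S → S → ℝ) (μ : Measure S) : blDist d μ μ = 0 :=
  le_antisymm (Real.sSup_nonpos fun _ ⟨_, _, _, hr⟩ => by simp [hr]) (blDist_nonneg d μ μ)

lemma abs_integral_sub_le_blDist [IsFiniteMeasure μ] [IsFiniteMeasure ν] (hf : Measurable f)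
    (h : blNormLE d f 1) : |∫ x, f x ∂μ - ∫ x, f x ∂ν| ≤ blDist d μ ν :=
  le_csSup ⟨μ.real Set.univ + ν.real Set.univ,
    fun _ ⟨_, _, hg, hr⟩ => hr ▸ abs_integral_sub_le_of_abs_le_one hg.abs_le⟩ ⟨f, hf, h, rfl⟩

lemma abs_integral_sub_le_mul_blDist [IsFiniteMeasure μ] [IsFiniteMeasure ν] (hc : 0 < c)
    (hf : Measurable f) (h : blNormLE d f c) :
    |∫ x, f x ∂μ - ∫ x, f x ∂ν| ≤ c * blDist d μ ν := by
  have hscaled := abs_integral_sub_le_blDist (μ := μ) (ν := ν) (hf.const_mul c⁻¹)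
    (by simpa [hc.ne'] using h.const_mul (inv_nonneg.2 hc.le))
  rw [integral_const_mul, integral_const_mul, ← mul_sub, abs_mul,
    abs_of_pos (inv_pos.2 hc)] at hscaled
  rwa [← inv_mul_le_iff₀ hc]

lemma blNormLE_integral_of_tvDist_le {κ : S → Measure S} [∀ x, IsProbabilityMeasure (κ x)]
    {L : ℝ} (hL : 0 ≤ L) (hκ : ∀ x x', tvDist (κ x) (κ x') ≤ L * d x x')
    {g : S → ℝ} (hg : Measurable g) (hg1 : ∀ x, |g x| ≤ 1) :
    blNormLE d (fun x => ∫ y, g y ∂κ x) (1 + L) :=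
  ⟨1, L, zero_le_one, hL, le_rfl,
    fun x => by simpa using abs_integral_le_measureReal_univ (κ x) hg1,
    fun x x' => (abs_integral_sub_le_tvDist hg hg1).trans (hκ x x')⟩

end Distances

lemma subsingleton_of_tvDist_le_mul_dist_of_neg {S : Type*} [MetricSpace S] [MeasurableSpace S]
    {κ : S → Measure S} {L : ℝ} (hL : L < 0) (hκ : ∀ x x', tvDist (κ x) (κ x') ≤ L * dist x x') :
    Subsingleton S :=
  ⟨fun x x' => dist_le_zero.1 <|
    nonpos_of_mul_nonneg_right ((tvDist_nonneg _ _).trans (hκ x x')) hL⟩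

section Predictive

variable {X Y U : Type*} [MeasurableSpace X] [Fintype Y]

lemma obsTVDist_self (T : X → U → Measure X) (Q : X → Y → ℝ) (z : Measure X) (u : U) :
    obsTVDist T Q z z u = 0 :=
  le_antisymm (Real.sSup_nonpos fun _ ⟨_, _, hr⟩ => by simp [hr])
    (Real.sSup_nonneg fun _ ⟨_, _, hr⟩ => hr ▸ abs_nonneg _)

lemma abs_sum_mul_le_one {p f : Y → ℝ} (hp : ∀ y, 0 ≤ p y) (hp1 : ∑ y, p y = 1)
    (hf : ∀ y, |f y| ≤ 1) : |∑ y, f y * p y| ≤ 1 :=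
  calc |∑ y, f y * p y| ≤ ∑ y, |f y| * p y := by
        simpa only [abs_mul, abs_of_nonneg (hp _)] using
          Finset.abs_sum_le_sum_abs (fun y => f y * p y) Finset.univ
    _ ≤ ∑ y, p y := Finset.sum_le_sum fun y _ => mul_le_of_le_one_left (hp y) (hf y)
    _ = 1 := hp1

lemma sum_mul_obsProb_eq_integral {T : X → U → Measure X} {u : U}
    (hT : Measurable fun x => T x u) [∀ x, IsProbabilityMeasure (T x u)]
    {Q : X → Y → ℝ} (hQ : ∀ y, Measurable fun x => Q x y) {C : ℝ} (hQC : ∀ x y, |Q x y| ≤ C)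
    (z : Measure X) [IsFiniteMeasure z] (f : Y → ℝ) :
    ∑ y, f y * obsProb T Q z u y = ∫ x, ∫ x', ∑ y, f y * Q x' y ∂T x u ∂z := by
  let κ : Kernel X X := ⟨fun x => T x u, hT⟩
  have : IsMarkovKernel κ := ⟨fun x => inferInstanceAs (IsProbabilityMeasure (T x u))⟩
  have hint (y : Y) : Integrable (fun x => f y * Q x y) (κ ∘ₘ z) :=
    (Integrable.of_bound (hQ y).aestronglyMeasurable C (ae_of_all _ (hQC · y))).const_mul _
  simp only [obsProb, ← integral_const_mul]
  change ∑ y, ∫ x, f y * Q x y ∂(κ ∘ₘ z) = _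
  rw [← integral_finsetSum _ fun y _ => hint y]
  exact Measure.integral_bind_kernel z κ (integrable_finsetSum _ fun y _ => hint y)

end Predictive

theorem statement4_general {m : ℕ} (Xs : Set (EuclideanSpace ℝ (Fin m)))
    {Y U : Type*} [Fintype Y]
    (T : Xs → U → MeasureTheory.Measure Xs)
    (hT_meas : ∀ u : U, Measurable fun x : Xs => T x u)
    (hT_prob : ∀ (x : Xs) (u : U), MeasureTheory.IsProbabilityMeasure (T x u))
    (Q : Xs → Y → ℝ)
    (hQ_meas : ∀ y : Y, Measurable fun x : Xs => Q x y)
    (hQ_nonneg : ∀ (x : Xs) (y : Y), 0 ≤ Q x y)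
    (hQ_sum : ∀ x : Xs, ∑ y : Y, Q x y = 1)
    (αX : ℝ)
    (hT_lip : ∀ (x x' : Xs) (u : U), tvDist (T x u) (T x' u) ≤ αX * dist x x')
    (z z' : MeasureTheory.Measure Xs)
    (hz : MeasureTheory.IsProbabilityMeasure z)
    (hz' : MeasureTheory.IsProbabilityMeasure z')
    (u : U) :
    obsTVDist T Q z z' u ≤ (1 + αX) * blDist (fun x x' : Xs => dist x x') z z' := by
  obtain hα | hα := lt_or_ge αX 0
  · have : Subsingleton Xs := subsingleton_of_tvDist_le_mul_dist_of_neg hα fun x x' => hT_lip x x' u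
    rw [Measure.eq_of_subsingleton z z', obsTVDist_self, blDist_self, mul_zero]
  have hQ_abs (x : Xs) (y : Y) : |Q x y| ≤ 1 :=
    abs_le.2 ⟨by linarith [hQ_nonneg x y],
      hQ_sum x ▸ Finset.single_le_sum (fun y' _ => hQ_nonneg x y') (Finset.mem_univ y)⟩
  refine Real.sSup_le ?_ (mul_nonneg (by linarith) (blDist_nonneg _ _ _))
  rintro _ ⟨f, hf, rfl⟩
  set g : Xs → ℝ := fun x' => ∑ y, f y * Q x' y
  have hg_meas : Measurable g := Finset.measurable_sum _ fun y _ => (hQ_meas y).const_mul (f y)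
  have hg_abs (x' : Xs) : |g x'| ≤ 1 := abs_sum_mul_le_one (hQ_nonneg x') (hQ_sum x') hf
  have hh_meas : Measurable fun x => ∫ x', g x' ∂T x u :=
    (hg_meas.stronglyMeasurable.integral_kernel (κ := ⟨fun x => T x u, hT_meas u⟩)).measurable
  rw [sum_mul_obsProb_eq_integral (hT_meas u) hQ_meas hQ_abs z f,
    sum_mul_obsProb_eq_integral (hT_meas u) hQ_meas hQ_abs z' f]
  exact abs_integral_sub_le_mul_blDist (by linarith) hh_meas
    (blNormLE_integral_of_tvDist_le hα (fun x x' => hT_lip x x' u) hg_meas hg_abs)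

theorem statement4 {m : ℕ} (Xs : Set (EuclideanSpace ℝ (Fin m))) (hXs : MeasurableSet Xs)
    {Y U : Type*} [Fintype Y] [Fintype U]
    (T : Xs → U → MeasureTheory.Measure Xs)
    (hT_meas : ∀ u : U, Measurable fun x : Xs => T x u)
    (hT_prob : ∀ (x : Xs) (u : U), MeasureTheory.IsProbabilityMeasure (T x u))
    (Q : Xs → Y → ℝ)
    (hQ_meas : ∀ y : Y, Measurable fun x : Xs => Q x y)
    (hQ_nonneg : ∀ (x : Xs) (y : Y), 0 ≤ Q x y)
    (hQ_sum : ∀ x : Xs, ∑ y : Y, Q x y = 1)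
    (αX : ℝ)
    (hT_lip : ∀ (x x' : Xs) (u : U), tvDist (T x u) (T x' u) ≤ αX * dist x x')
    (z z' : MeasureTheory.Measure Xs)
    (hz : MeasureTheory.IsProbabilityMeasure z)
    (hz' : MeasureTheory.IsProbabilityMeasure z')
    (u : U) :
    obsTVDist T Q z z' u ≤ (1 + αX) * blDist (fun x x' : Xs => dist x x') z z' :=
  statement4_general Xs T hT_meas hT_prob Q hQ_meas hQ_nonneg hQ_sum αX hT_lip z z' hz hz' u
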